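/- Let G be a finite abelian group, m > 1, and for 1 ≤ i ≤ m define γ_i: G^m → G^m by (g_1,...,g_m) ↦ (g_1,...,g_{i-1}, g_{i-1} g_i^{-1} g_{i+1}, g_{i+1},...,g_m) (with the convention g_0 = g_{m+1} = e). Then each γ_i is a group automorphism of G^m of order dividing 2 which maps the generating set S onto itself, and hence is an automorphism of the Cayley graph G_m(G). -/
import Mathlib

namespace CayleyStmt15

variable {G : Type*}

def intvl [Group G] (m : ℕ) (x : G) (k l : ℕ) : Fin m → G :=
  fun i => if k ≤ i.1 + 1 ∧ i.1 + 1 < l then x else 1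

def cS (G : Type*) [Group G] (m : ℕ) : Set (Fin m → G) :=
  {v | ∃ (x : G) (k l : ℕ), x ≠ 1 ∧ 1 ≤ k ∧ k < l ∧ l ≤ m + 1 ∧ v = intvl m x k l}

def cAdj [Group G] (m : ℕ) (g h : Fin m → G) : Prop := h * g⁻¹ ∈ cS G m

def coord [Group G] (m : ℕ) (g : Fin m → G) (p : ℕ) : G :=
  if h : 1 ≤ p ∧ p ≤ m then g ⟨p - 1, by omega⟩ else 1

def gam [Group G] (m i : ℕ) (g : Fin m → G) : Fin m → G :=
  fun j => if j.1 + 1 = i then coord m g (i - 1) * (coord m g i)⁻¹ * coord m g (i + 1)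
    else g j

section lemmas
variable [CommGroup G] {m i : ℕ}

lemma coord_mul (g h : Fin m → G) (p : ℕ) :
    coord m (g * h) p = coord m g p * coord m h p := by
  unfold coord; split_ifs <;> simp [Pi.mul_apply]

lemma coord_inv (g : Fin m → G) (p : ℕ) :
    coord m g⁻¹ p = (coord m g p)⁻¹ := by
  unfold coord; split_ifs <;> simp [Pi.inv_apply]

lemma gam_mul (g h : Fin m → G) : gam m i (g * h) = gam m i g * gam m i h := by
  funext j
  simp only [gam, Pi.mul_apply]
  split_ifs with hj
  · simp only [coord_mul, mul_inv]
    simp [mul_assoc, mul_comm, mul_left_comm]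
  · rfl

lemma coord_apply (g : Fin m → G) (p : ℕ) (h : 1 ≤ p ∧ p ≤ m) :
    coord m g p = g ⟨p - 1, by omega⟩ := dif_pos h

lemma coord_apply' (g : Fin m → G) (p : ℕ) (h : ¬(1 ≤ p ∧ p ≤ m)) :
    coord m g p = 1 := dif_neg h

lemma coord_gam (hi1 : 1 ≤ i) (him : i ≤ m) (g : Fin m → G) (p : ℕ) :
    coord m (gam m i g) p =
      if p = i then coord m g (i - 1) * (coord m g i)⁻¹ * coord m g (i + 1)
      else coord m g p := by
  by_cases hp : p = i
  · subst hp
    rw [if_pos rfl, coord_apply _ _ ⟨hi1, him⟩]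
    show (if p - 1 + 1 = p then _ else _) = _
    rw [if_pos (by omega)]
  · rw [if_neg hp]
    by_cases h1 : 1 ≤ p ∧ p ≤ m
    · rw [coord_apply _ _ h1, coord_apply _ _ h1]
      show (if p - 1 + 1 = i then _ else _) = _
      rw [if_neg (by omega)]
    · rw [coord_apply' _ _ h1, coord_apply' _ _ h1]

lemma gam_gam (hi1 : 1 ≤ i) (him : i ≤ m) (g : Fin m → G) :
    gam m i (gam m i g) = g := by
  funext j
  by_cases hj : j.1 + 1 = i
  · show (if j.1 + 1 = i then _ else _) = g j
    rw [if_pos hj, coord_gam hi1 him, coord_gam hi1 him, coord_gam hi1 him,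
      if_neg (by omega), if_pos rfl, if_neg (by omega)]
    have hb : coord m g i = g j := by
      rw [coord_apply _ _ ⟨hi1, him⟩]
      congr 1
      exact Fin.ext (show i - 1 = j.1 by omega)
    rw [← hb]
    simp [mul_inv, mul_comm, mul_assoc, mul_left_comm]
  · show (if j.1 + 1 = i then _ else _) = g j
    rw [if_neg hj]
    show (if j.1 + 1 = i then _ else _) = g j
    rw [if_neg hj]

lemma coord_one (p : ℕ) : coord m (1 : Fin m → G) p = 1 := by
  unfold coord; split_ifs <;> rfl

lemma gam_one : gam m i (1 : Fin m → G) = 1 := by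
  funext j
  show (if j.1 + 1 = i then _ else _) = _
  split_ifs with h
  · simp [coord_one]
  · rfl

lemma gam_inv (g : Fin m → G) : gam m i g⁻¹ = (gam m i g)⁻¹ := by
  have h : gam m i g * gam m i g⁻¹ = 1 := by
    rw [← gam_mul, mul_inv_cancel, gam_one]
  exact (inv_eq_of_mul_eq_one_right h).symm

lemma coord_intvl {x : G} {k l : ℕ} (hk : 1 ≤ k) (hl : l ≤ m + 1) (p : ℕ) :
    coord m (intvl m x k l) p = if k ≤ p ∧ p < l then x else 1 := by
  by_cases h1 : 1 ≤ p ∧ p ≤ m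
  · rw [coord_apply _ _ h1]
    show (if k ≤ p - 1 + 1 ∧ p - 1 + 1 < l then x else 1) = _
    have : p - 1 + 1 = p := by omega
    rw [this]
  · rw [coord_apply' _ _ h1, if_neg (by omega)]

lemma gam_intvl_eq {x y : G} {k l k' l' : ℕ} (hk : 1 ≤ k) (hl : l ≤ m + 1)
    (hmid : (if k ≤ i - 1 ∧ i - 1 < l then x else 1) *
        (if k ≤ i ∧ i < l then x else 1)⁻¹ *
        (if k ≤ i + 1 ∧ i + 1 < l then x else 1) = if k' ≤ i ∧ i < l' then y else 1)
    (hoth : ∀ p : ℕ, p ≠ i →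
        (if k ≤ p ∧ p < l then x else 1) = (if k' ≤ p ∧ p < l' then y else 1)) :
    gam m i (intvl m x k l) = intvl m y k' l' := by
  funext j
  by_cases hj : j.1 + 1 = i
  · show (if j.1 + 1 = i then _ else _) = _
    rw [if_pos hj, coord_intvl hk hl, coord_intvl hk hl, coord_intvl hk hl, hmid]
    show _ = (if k' ≤ j.1 + 1 ∧ j.1 + 1 < l' then y else 1)
    rw [hj]
  · show (if j.1 + 1 = i then _ else _) = _
    rw [if_neg hj]
    exact hoth (j.1 + 1) hj

lemma gam_intvl_mem {x : G} {k l : ℕ} (hx : x ≠ 1) (hk : 1 ≤ k) (hkl : k < l)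
    (hl : l ≤ m + 1) (hi1 : 1 ≤ i) (him : i ≤ m) :
    gam m i (intvl m x k l) ∈ cS G m := by
  rcases Nat.lt_or_ge l i with h1 | h1
  · refine ⟨x, k, l, hx, hk, hkl, hl, gam_intvl_eq hk hl ?_ ?_⟩
    · split_ifs <;> first | (exfalso; omega) | group
    · intro p hp; split_ifs <;> first | rfl | (exfalso; omega)
  rcases Nat.eq_or_lt_of_le h1 with h2 | h2
  · refine ⟨x, k, i + 1, hx, hk, by omega, by omega, gam_intvl_eq hk hl ?_ ?_⟩
    · split_ifs <;> first | (exfalso; omega) | group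
    · intro p hp; split_ifs <;> first | rfl | (exfalso; omega)
  rcases Nat.eq_or_lt_of_le h2 with h3 | h3
  · rcases Nat.eq_or_lt_of_le (show k ≤ i by omega) with h4 | h4
    · refine ⟨x⁻¹, i, i + 1, inv_ne_one.mpr hx, hi1, by omega, by omega, gam_intvl_eq hk hl ?_ ?_⟩
      · split_ifs <;> first | (exfalso; omega) | group
      · intro p hp; split_ifs <;> first | rfl | (exfalso; omega)

    · refine ⟨x, k, i, hx, hk, by omega, by omega, gam_intvl_eq hk hl ?_ ?_⟩
      · split_ifs <;> first | (exfalso; omega) | group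
      · intro p hp; split_ifs <;> first | rfl | (exfalso; omega)
  rcases Nat.lt_trichotomy k i with h4 | h4 | h4
  · refine ⟨x, k, l, hx, hk, hkl, hl, gam_intvl_eq hk hl ?_ ?_⟩
    · split_ifs <;> first | (exfalso; omega) | group
    · intro p hp; split_ifs <;> first | rfl | (exfalso; omega)
  · refine ⟨x, i + 1, l, hx, by omega, by omega, hl, gam_intvl_eq hk hl ?_ ?_⟩
    · split_ifs <;> first | (exfalso; omega) | group
    · intro p hp; split_ifs <;> first | rfl | (exfalso; omega)
  rcases Nat.eq_or_lt_of_le (show i + 1 ≤ k by omega) with h5 | h5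
  · refine ⟨x, i, l, hx, hi1, by omega, hl, gam_intvl_eq hk hl ?_ ?_⟩
    · split_ifs <;> first | (exfalso; omega) | group
    · intro p hp; split_ifs <;> first | rfl | (exfalso; omega)
  · refine ⟨x, k, l, hx, hk, hkl, hl, gam_intvl_eq hk hl ?_ ?_⟩
    · split_ifs <;> first | (exfalso; omega) | group
    · intro p hp; split_ifs <;> first | rfl | (exfalso; omega)

lemma gam_mem_cS {v : Fin m → G} (hi1 : 1 ≤ i) (him : i ≤ m) (hv : v ∈ cS G m) :
    gam m i v ∈ cS G m := by
  obtain ⟨x, k, l, hx, hk, hkl, hl, rfl⟩ := hv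
  exact gam_intvl_mem hx hk hkl hl hi1 him

end lemmas

/-- For abelian `G`, each `γ_i` is a group automorphism of `G^m` of order
dividing `2` which maps `S` onto itself, hence is an automorphism of the
Cayley graph `Cay(G^m, S)`. -/
theorem gam_is_graph_automorphism [CommGroup G] [Fintype G]
    (m : ℕ) (hm : 1 < m) (i : ℕ) (hi1 : 1 ≤ i) (him : i ≤ m) :
    (∀ g h : Fin m → G, gam m i (g * h) = gam m i g * gam m i h) ∧
    Function.Bijective (gam m i (G := G)) ∧
    (gam m i (G := G)) ∘ (gam m i) = id ∧
    (gam m i) '' (cS G m) = cS G m ∧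
    (∀ g h : Fin m → G, cAdj m g h → cAdj m (gam m i g) (gam m i h)) := by
  have hmul : ∀ g h : Fin m → G, gam m i (g * h) = gam m i g * gam m i h :=
    fun g h => gam_mul g h
  have hinv : Function.Involutive (gam m i (G := G)) := fun g => gam_gam hi1 him g
  refine ⟨hmul, hinv.bijective, funext fun g => hinv g, ?_, ?_⟩
  · apply Set.eq_of_subset_of_subset
    · rintro v ⟨w, hw, rfl⟩
      exact gam_mem_cS hi1 him hw
    · intro v hv
      exact ⟨gam m i v, gam_mem_cS hi1 him hv, hinv v⟩
  · intro g h hgh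
    show gam m i h * (gam m i g)⁻¹ ∈ cS G m
    rw [← gam_inv, ← gam_mul]
    exact gam_mem_cS hi1 him hgh


end CayleyStmt15
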